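/- arXiv:0811.3331 — 7 statements merged into one kernel-verified Lean document; each statement's English description precedes it below -/
import Mathlib

section
/- Let ν > 0, λ ≥ 0 and 0 ≤ r < 8/9, and let φ(t) = ν(1−r)t + ν r t/(1+λ²t²). Then φ is strictly increasing on ℝ, φ(t) → +∞ as t → +∞, φ(t) → −∞ as t → −∞, and φ is a bijection from ℝ onto ℝ. -/
/-!
Writing `D(t) = 1 + λ²t²`, one has
`φ t - φ s = ν (t - s) ((1 - r) + r (1 - λ²ts) / (D(t) D(s)))`, and
`(1 - ab) / ((1 + a²)(1 + b²)) ≥ -1/8` for all real `a, b` (equality at `a = b = √3`).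
Hence `φ t - φ s ≥ ν (1 - 9r/8) (t - s)` for `s ≤ t`: for `r < 8/9` the map `φ` grows at
least linearly with positive slope, which gives strict monotonicity and the limits at `±∞`;
continuity then gives surjectivity.
-/

open Filter

section LowerSlope

variable {f : ℝ → ℝ} {c : ℝ}

lemma strictMono_of_mul_sub_le (hc : 0 < c) (hf : ∀ s t, s ≤ t → c * (t - s) ≤ f t - f s) :
    StrictMono f := fun s t hst => by
  nlinarith [hf s t hst.le, mul_pos hc (sub_pos.mpr hst)]

lemma tendsto_atTop_atTop_of_mul_sub_le (hc : 0 < c)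
    (hf : ∀ s t, s ≤ t → c * (t - s) ≤ f t - f s) : Tendsto f atTop atTop := by
  refine tendsto_atTop_mono' _ ?_
    (tendsto_atTop_add_const_left _ (f 0) (tendsto_id.const_mul_atTop hc))
  filter_upwards [eventually_ge_atTop 0] with t ht
  have := hf 0 t ht
  simp only [id, sub_zero] at this ⊢
  linarith

lemma tendsto_atBot_atBot_of_mul_sub_le (hc : 0 < c)
    (hf : ∀ s t, s ≤ t → c * (t - s) ≤ f t - f s) : Tendsto f atBot atBot := by
  refine tendsto_atBot_mono' _ ?_
    (tendsto_atBot_add_const_left _ (f 0) (tendsto_id.const_mul_atBot hc))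
  filter_upwards [eventually_le_atBot 0] with t ht
  have := hf t 0 ht
  simp only [id, zero_sub, mul_neg] at this ⊢
  linarith

end LowerSlope

lemma neg_one_div_eight_le_one_sub_mul_div (a b : ℝ) :
    -1 / 8 ≤ (1 - a * b) / ((1 + a ^ 2) * (1 + b ^ 2)) := by
  rw [le_div_iff₀ (by positivity)]
  -- `(1 + a²)(1 + b²) + 8(1 - ab) = (ab - 3)² + (a - b)²`
  nlinarith [sq_nonneg (a * b - 3), sq_nonneg (a - b)]

noncomputable def shearStress (ν lam r t : ℝ) : ℝ :=
  ν * (1 - r) * t + ν * r * t / (1 + lam ^ 2 * t ^ 2)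

lemma continuous_shearStress (ν lam r : ℝ) : Continuous (shearStress ν lam r) := by
  unfold shearStress
  fun_prop (disch := intro t; positivity)

lemma shearStress_sub (ν lam r s t : ℝ) :
    shearStress ν lam r t - shearStress ν lam r s = ν * (t - s) *
      ((1 - r) +
        r * ((1 - lam * t * (lam * s)) / ((1 + (lam * t) ^ 2) * (1 + (lam * s) ^ 2)))) := by
  have hDt : 1 + lam ^ 2 * t ^ 2 ≠ 0 := by positivity
  have hDs : 1 + lam ^ 2 * s ^ 2 ≠ 0 := by positivity
  unfold shearStress
  simp only [mul_pow]
  field_simp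
  ring

lemma mul_sub_le_shearStress_sub {ν r : ℝ} (hν : 0 < ν) (hr : 0 ≤ r) (lam : ℝ) {s t : ℝ}
    (hst : s ≤ t) :
    ν * (1 - 9 * r / 8) * (t - s) ≤ shearStress ν lam r t - shearStress ν lam r s := by
  rw [shearStress_sub, mul_right_comm]
  gcongr ν * (t - s) * ?_
  have hbound := neg_one_div_eight_le_one_sub_mul_div (lam * t) (lam * s)
  linarith [mul_le_mul_of_nonneg_left hbound hr]

theorem stmt_1_general (ν lam r : ℝ) (hν : 0 < ν) (hr0 : 0 ≤ r) (hr1 : r < 8 / 9)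
    (φ : ℝ → ℝ) (hφ : ∀ t, φ t = ν * (1 - r) * t + ν * r * t / (1 + lam ^ 2 * t ^ 2)) :
    StrictMono φ ∧ Tendsto φ atTop atTop ∧ Tendsto φ atBot atBot ∧ Function.Bijective φ := by
  obtain rfl : φ = shearStress ν lam r := funext hφ
  have hc : 0 < ν * (1 - 9 * r / 8) := mul_pos hν (by linarith)
  have hslope := fun s t (hst : s ≤ t) => mul_sub_le_shearStress_sub hν hr0 lam hst
  have htop := tendsto_atTop_atTop_of_mul_sub_le hc hslope
  have hbot := tendsto_atBot_atBot_of_mul_sub_le hc hslope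
  have hmono := strictMono_of_mul_sub_le hc hslope
  exact ⟨hmono, htop, hbot, hmono.injective,
    (continuous_shearStress ν lam r).surjective htop hbot⟩

/-- For ν > 0, λ ≥ 0, 0 ≤ r < 8/9 and φ(t) = ν(1−r)t + ν r t/(1+λ²t²), the function φ is
strictly increasing, tends to +∞ at +∞ and to −∞ at −∞, and is a bijection of ℝ onto ℝ. -/
theorem stmt_1 (ν lam r : ℝ) (hν : 0 < ν) (hlam : 0 ≤ lam) (hr0 : 0 ≤ r) (hr1 : r < 8 / 9)
    (φ : ℝ → ℝ) (hφ : ∀ t, φ t = ν * (1 - r) * t + ν * r * t / (1 + lam ^ 2 * t ^ 2)) :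
    StrictMono φ ∧ Tendsto φ atTop atTop ∧ Tendsto φ atBot atBot ∧ Function.Bijective φ :=
  stmt_1_general ν lam r hν hr0 hr1 φ hφ
end

section
/- Let ν > 0, λ ≥ 0, 0 ≤ r < 8/9, and let ψ be the inverse of φ(t) = ν(1−r)t + ν r t/(1+λ²t²). Then for every h > 0 and every q, s ∈ ℝ there exists a unique κ ∈ ℝ such that ∫₀^h ψ(q t + κ) dt + s = 0. -/
/-!
Since `φ` is continuous and injective, it is strictly monotone or strictly antitone, and so is its
inverse `ψ`, which is then also continuous, being a monotone surjection. Replacing `ψ` by `-ψ` if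
necessary, `ψ` is strictly increasing, and then so is `G κ = ∫₀^h ψ(q t + κ) dt`. As `|q t| ≤ |q| h`
on `[0, h]`, `G` is squeezed between `h ψ(κ - |q| h)` and `h ψ(κ + |q| h)`, so it tends to `±∞`
at `±∞`; being continuous, `G` is a bijection of `ℝ`, and `κ = G⁻¹(-s)`.
-/

open Filter Function

theorem Function.RightInverse.strictMono {α β : Type*} [LinearOrder α] [Preorder β]
    {φ : α → β} {ψ : β → α} (hψ : RightInverse ψ φ) (hφ : StrictMono φ) : StrictMono ψ :=
  fun a b hab => hφ.lt_iff_lt.mp (by rwa [hψ a, hψ b])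

theorem Function.RightInverse.strictAnti {α β : Type*} [LinearOrder α] [Preorder β]
    {φ : α → β} {ψ : β → α} (hψ : RightInverse ψ φ) (hφ : StrictAnti φ) : StrictAnti ψ :=
  fun a b hab => hφ.lt_iff_gt.mp (by rwa [hψ a, hψ b])

namespace intervalIntegral

variable {ψ : ℝ → ℝ} {h : ℝ} (q : ℝ)

theorem strictMono_integral_comp_mul_add (hψ : StrictMono ψ) (hc : Continuous ψ) (hh : 0 < h) :
    StrictMono fun κ => ∫ t in (0 : ℝ)..h, ψ (q * t + κ) := by
  intro a b hab
  have hlt : ∀ t, ψ (q * t + a) < ψ (q * t + b) := fun t => hψ (by linarith)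
  exact integral_lt_integral_of_continuousOn_of_le_of_exists_lt hh (by fun_prop) (by fun_prop)
    (fun t _ => (hlt t).le) ⟨h, Set.right_mem_Icc.2 hh.le, hlt h⟩

theorem mul_le_integral_comp_mul_add_le (hψ : Monotone ψ) (hc : Continuous ψ) (hh : 0 ≤ h)
    (κ : ℝ) :
    h * ψ (κ - |q| * h) ≤ ∫ t in (0 : ℝ)..h, ψ (q * t + κ) ∧
      ∫ t in (0 : ℝ)..h, ψ (q * t + κ) ≤ h * ψ (κ + |q| * h) := by
  have hqt : ∀ t ∈ Set.Icc 0 h, |q * t| ≤ |q| * h := fun t ht => by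
    rw [abs_mul, abs_of_nonneg ht.1]
    exact mul_le_mul_of_nonneg_left ht.2 (abs_nonneg q)
  have hint : IntervalIntegrable (fun t => ψ (q * t + κ)) MeasureTheory.volume 0 h :=
    (by fun_prop : Continuous fun t => ψ (q * t + κ)).intervalIntegrable 0 h
  constructor
  · simpa using integral_mono_on hh intervalIntegrable_const hint fun t ht =>
      hψ (by linarith [(abs_le.mp (hqt t ht)).1])
  · simpa using integral_mono_on hh hint intervalIntegrable_const fun t ht =>
      hψ (by linarith [(abs_le.mp (hqt t ht)).2])

theorem bijective_integral_comp_mul_add_of_strictMono (hψ : StrictMono ψ) (hs : Surjective ψ)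
    (hh : 0 < h) : Bijective fun κ => ∫ t in (0 : ℝ)..h, ψ (q * t + κ) := by
  have hc : Continuous ψ := hψ.monotone.continuous_of_surjective hs
  have hbounds := mul_le_integral_comp_mul_add_le q hψ.monotone hc hh.le
  have htop : Tendsto ψ atTop atTop :=
    tendsto_atTop_atTop_of_monotone hψ.monotone fun b => (hs b).imp fun _ ha => ha.ge
  have hbot : Tendsto ψ atBot atBot :=
    tendsto_atBot_atBot_of_monotone hψ.monotone fun b => (hs b).imp fun _ ha => ha.le
  refine ⟨(strictMono_integral_comp_mul_add q hψ hc hh).injective,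
    Continuous.surjective (by fun_prop) ?_ ?_⟩
  · exact tendsto_atTop_mono (fun κ => (hbounds κ).1)
      ((htop.comp (tendsto_atTop_add_const_right _ _ tendsto_id)).const_mul_atTop hh)
  · exact tendsto_atBot_mono (fun κ => (hbounds κ).2)
      ((hbot.comp (tendsto_atBot_add_const_right _ _ tendsto_id)).const_mul_atBot hh)

theorem bijective_integral_comp_mul_add_of_strictAnti (hψ : StrictAnti ψ) (hs : Surjective ψ)
    (hh : 0 < h) : Bijective fun κ => ∫ t in (0 : ℝ)..h, ψ (q * t + κ) := by
  have := bijective_integral_comp_mul_add_of_strictMono q (ψ := -ψ) hψ.neg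
    (neg_surjective.comp hs) hh
  simpa [comp_def, integral_neg] using neg_involutive.bijective.comp this

end intervalIntegral

theorem stmt_3_general (ν lam r : ℝ)
    (φ ψ : ℝ → ℝ) (hφ : ∀ t, φ t = ν * (1 - r) * t + ν * r * t / (1 + lam ^ 2 * t ^ 2))
    (hψl : Function.LeftInverse ψ φ) (hψr : Function.RightInverse ψ φ) :
    ∀ h q s : ℝ, 0 < h →
      ∃! κ : ℝ, (∫ t in (0 : ℝ)..h, ψ (q * t + κ)) + s = 0 := by
  intro h q s hh
  have hφc : Continuous φ := by
    rw [funext hφ]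
    exact Continuous.add (by fun_prop)
      (Continuous.div (by fun_prop) (by fun_prop) fun t => by positivity)
  have hG : Bijective fun κ => ∫ t in (0 : ℝ)..h, ψ (q * t + κ) :=
    (hφc.strictMono_of_inj hψl.injective).elim
      (fun hφm => intervalIntegral.bijective_integral_comp_mul_add_of_strictMono q
        (hψr.strictMono hφm) hψl.surjective hh)
      (fun hφa => intervalIntegral.bijective_integral_comp_mul_add_of_strictAnti q
        (hψr.strictAnti hφa) hψl.surjective hh)
  simpa [add_eq_zero_iff_eq_neg] using hG.existsUnique (-s)

/-- For ν > 0, λ ≥ 0, 0 ≤ r < 8/9 and ψ the inverse of φ(t) = ν(1−r)t + ν r t/(1+λ²t²):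
for every h > 0 and q, s ∈ ℝ there is a unique κ ∈ ℝ with ∫₀^h ψ(q t + κ) dt + s = 0. -/
theorem stmt_3 (ν lam r : ℝ) (hν : 0 < ν) (hlam : 0 ≤ lam) (hr0 : 0 ≤ r) (hr1 : r < 8 / 9)
    (φ ψ : ℝ → ℝ) (hφ : ∀ t, φ t = ν * (1 - r) * t + ν * r * t / (1 + lam ^ 2 * t ^ 2))
    (hψl : Function.LeftInverse ψ φ) (hψr : Function.RightInverse ψ φ) :
    ∀ h q s : ℝ, 0 < h →
      ∃! κ : ℝ, (∫ t in (0 : ℝ)..h, ψ (q * t + κ)) + s = 0 :=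
  stmt_3_general ν lam r φ ψ hφ hψl hψr
end

section
/- Let ν > 0, λ ≥ 0, 0 ≤ r < 8/9, let ψ be the inverse of φ(t) = ν(1−r)t + ν r t/(1+λ²t²), and fix h > 0 and s ∈ ℝ. Suppose κ : ℝ → ℝ is differentiable and satisfies ∫₀^h ψ(q t + κ(q)) dt = −s for every q ∈ ℝ. Then for every q ∈ ℝ: (i) ∫₀^h (t + κ'(q)) ψ'(q t + κ(q)) dt = 0, i.e. κ'(q) = −(∫₀^h t ψ'(q t + κ(q)) dt)/(∫₀^h ψ'(q t + κ(q)) dt); and (ii) κ'(q) < 0. -/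
/-!
Differentiating the constraint `∫₀^h ψ(q t + κ q) dt = -s` in `q` under the integral sign gives
`∫₀^h (t + κ' q) ψ'(q t + κ q) dt = 0`. Differentiation under the integral is legitimate because
`ψ' = 1 / φ'(ψ)` is continuous and bounded by `1 / (ν (1 - 9r/8))`, which comes from
`(1 - x) / (1 + x)² ≥ -1/8` for `x ≥ 0`. As `ψ' > 0`, `-κ' q` is the mean of `t` over `(0, h)`
for the weight `ψ'(q t + κ q)`, hence positive.
-/

open MeasureTheory Set

noncomputable def phiDeriv (ν lam r t : ℝ) : ℝ :=
  ν * (1 - r) + ν * r * (1 - lam ^ 2 * t ^ 2) / (1 + lam ^ 2 * t ^ 2) ^ 2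

section Phi

variable (ν lam r : ℝ)

theorem hasDerivAt_phi (t : ℝ) :
    HasDerivAt (fun u => ν * (1 - r) * u + ν * r * u / (1 + lam ^ 2 * u ^ 2))
      (phiDeriv ν lam r t) t := by
  have hden : 1 + lam ^ 2 * t ^ 2 ≠ 0 := by positivity
  have hnum : HasDerivAt (fun u => ν * r * u) (ν * r) t := by
    simpa using (hasDerivAt_id t).const_mul (ν * r)
  have hquot := hnum.div ((hasDerivAt_pow 2 t).const_mul (lam ^ 2) |>.const_add 1) hden
  refine (((hasDerivAt_id t).const_mul (ν * (1 - r))).add hquot).congr_deriv ?_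
  rw [phiDeriv]
  field_simp
  ring

theorem continuous_phiDeriv : Continuous (phiDeriv ν lam r) := by
  unfold phiDeriv
  exact continuous_const.add <| by fun_prop (disch := intro t; positivity)

/-- The minimum is attained at `x = 3`. -/
theorem neg_inv_eight_le_one_sub_div_one_add_sq {x : ℝ} (hx : 0 ≤ x) :
    -(1 / 8 : ℝ) ≤ (1 - x) / (1 + x) ^ 2 := by
  rw [le_div_iff₀ (by positivity)]
  nlinarith [sq_nonneg (x - 3)]

variable {ν r}

theorem le_phiDeriv (hν : 0 ≤ ν) (hr : 0 ≤ r) (t : ℝ) :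
    ν * (1 - 9 * r / 8) ≤ phiDeriv ν lam r t := by
  have h := mul_le_mul_of_nonneg_left
    (neg_inv_eight_le_one_sub_div_one_add_sq (x := lam ^ 2 * t ^ 2) (by positivity))
    (mul_nonneg hν hr)
  rw [phiDeriv, mul_div_assoc (ν * r)]
  linarith

end Phi

theorem hasDerivAt_inverse_of_deriv_pos {φ ψ φ' : ℝ → ℝ} (hφ : ∀ t, HasDerivAt φ (φ' t) t)
    (hpos : ∀ t, 0 < φ' t) (hψl : Function.LeftInverse ψ φ) (hψr : Function.RightInverse ψ φ)
    (x : ℝ) : HasDerivAt ψ (φ' (ψ x))⁻¹ x := by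
  have hφmono : StrictMono φ := strictMono_of_deriv_pos fun t => (hφ t).deriv ▸ hpos t
  have hψmono : Monotone ψ := fun a b hab => hφmono.le_iff_le.mp (by rwa [hψr a, hψr b])
  have hψcont : Continuous ψ := hψmono.continuous_of_surjective hψl.surjective
  exact (hφ (ψ x)).of_local_left_inverse hψcont.continuousAt (hpos _).ne'
    (.of_forall hψr)

section ParametricIntegral

variable {g g' : ℝ → ℝ} {K : ℝ}

theorem hasFDerivAt_intervalIntegral_comp_affine (hg : ∀ x, HasDerivAt g (g' x) x)
    (hg'c : Continuous g') (hg'b : ∀ x, |g' x| ≤ K) (a b : ℝ) (p : ℝ × ℝ) :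
    HasFDerivAt (fun p : ℝ × ℝ => ∫ t in a..b, g (p.1 * t + p.2))
      (∫ t in a..b, g' (p.1 * t + p.2) •
        (t • ContinuousLinearMap.fst ℝ ℝ ℝ + ContinuousLinearMap.snd ℝ ℝ ℝ)) p := by
  have hgc : Continuous g := continuous_iff_continuousAt.2 fun x => (hg x).continuousAt
  have hK : 0 ≤ K := (abs_nonneg _).trans (hg'b 0)
  have hnorm (t : ℝ) :
      ‖t • ContinuousLinearMap.fst ℝ ℝ ℝ + ContinuousLinearMap.snd ℝ ℝ ℝ‖ ≤ |t| + 1 :=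
    calc _ ≤ |t| * ‖ContinuousLinearMap.fst ℝ ℝ ℝ‖ + ‖ContinuousLinearMap.snd ℝ ℝ ℝ‖ := by
          rw [← Real.norm_eq_abs, ← norm_smul]
          exact norm_add_le _ _
      _ ≤ |t| * 1 + 1 := by
          gcongr
          exacts [ContinuousLinearMap.norm_fst_le ℝ ℝ ℝ, ContinuousLinearMap.norm_snd_le ℝ ℝ ℝ]
      _ = |t| + 1 := by rw [mul_one]
  have hinner (t : ℝ) (q : ℝ × ℝ) : HasFDerivAt (fun p : ℝ × ℝ => p.1 * t + p.2)
      (t • ContinuousLinearMap.fst ℝ ℝ ℝ + ContinuousLinearMap.snd ℝ ℝ ℝ) q :=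
    (hasFDerivAt_fst.mul_const t).add hasFDerivAt_snd
  refine intervalIntegral.hasFDerivAt_integral_of_dominated_of_fderiv_le (μ := volume)
    (F := fun (p : ℝ × ℝ) (t : ℝ) => g (p.1 * t + p.2))
    (F' := fun (p : ℝ × ℝ) (t : ℝ) => g' (p.1 * t + p.2) •
      (t • ContinuousLinearMap.fst ℝ ℝ ℝ + ContinuousLinearMap.snd ℝ ℝ ℝ))
    (bound := fun t => K * (|t| + 1)) Filter.univ_mem
    (.of_forall fun q => (hgc.comp (by fun_prop)).aestronglyMeasurable)
    ((hgc.comp (by fun_prop)).intervalIntegrable a b)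
    ((hg'c.comp (by fun_prop)).smul (by fun_prop)).aestronglyMeasurable
    (.of_forall fun t _ q _ => ?_) ((by fun_prop : Continuous _).intervalIntegrable a b)
    (.of_forall fun t _ q _ => (hg _).comp_hasFDerivAt q (hinner t q))
  rw [norm_smul, Real.norm_eq_abs]
  exact mul_le_mul (hg'b _) (hnorm t) (norm_nonneg _) hK

theorem HasDerivAt.intervalIntegral_comp_affine (hg : ∀ x, HasDerivAt g (g' x) x)
    (hg'c : Continuous g') (hg'b : ∀ x, |g' x| ≤ K) (a b : ℝ) {κ : ℝ → ℝ} {κ' q : ℝ}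
    (hκ : HasDerivAt κ κ' q) :
    HasDerivAt (fun q => ∫ t in a..b, g (q * t + κ q))
      (∫ t in a..b, (t + κ') * g' (q * t + κ q)) q := by
  refine ((hasFDerivAt_intervalIntegral_comp_affine hg hg'c hg'b a b (q, κ q)).comp_hasDerivAt q
    ((hasDerivAt_id q).prodMk hκ)).congr_deriv ?_
  rw [ContinuousLinearMap.intervalIntegral_apply
    (((hg'c.comp (by fun_prop)).smul (by fun_prop)).intervalIntegrable a b)]
  congr 1 with t
  simp only [smul_apply, add_apply,
    ContinuousLinearMap.coe_fst', ContinuousLinearMap.coe_snd', smul_eq_mul]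
  ring

end ParametricIntegral

section WeightedMean

variable {w : ℝ → ℝ} {h c : ℝ}

theorem eq_neg_div_of_intervalIntegral_add_mul_eq_zero (hw : Continuous w)
    (hne : ∫ t in (0 : ℝ)..h, w t ≠ 0) (h0 : ∫ t in (0 : ℝ)..h, (t + c) * w t = 0) :
    c = -(∫ t in (0 : ℝ)..h, t * w t) / ∫ t in (0 : ℝ)..h, w t := by
  have hsplit : ∫ t in (0 : ℝ)..h, (t + c) * w t =
      (∫ t in (0 : ℝ)..h, t * w t) + c * ∫ t in (0 : ℝ)..h, w t := by
    have htw : Continuous fun t => t * w t := by fun_prop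
    simp only [add_mul]
    rw [intervalIntegral.integral_add (htw.intervalIntegrable 0 h)
      ((hw.const_mul c).intervalIntegrable 0 h), intervalIntegral.integral_const_mul]
  rw [eq_div_iff hne]
  linarith

theorem neg_div_intervalIntegral_neg (hw : Continuous w) (hpos : ∀ t ∈ Ioo 0 h, 0 < w t)
    (hh : 0 < h) : -(∫ t in (0 : ℝ)..h, t * w t) / ∫ t in (0 : ℝ)..h, w t < 0 := by
  have htw : Continuous fun t => t * w t := by fun_prop
  exact div_neg_of_neg_of_pos
    (neg_neg_of_pos <| intervalIntegral.intervalIntegral_pos_of_pos_on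
      (htw.intervalIntegrable 0 h) (fun t ht => mul_pos ht.1 (hpos t ht)) hh)
    (intervalIntegral.intervalIntegral_pos_of_pos_on (hw.intervalIntegrable 0 h) hpos hh)

end WeightedMean

theorem stmt_5_general (ν lam r : ℝ) (hν : 0 < ν) (hr0 : 0 ≤ r) (hr1 : r < 8 / 9)
    (φ ψ : ℝ → ℝ) (hφ : ∀ t, φ t = ν * (1 - r) * t + ν * r * t / (1 + lam ^ 2 * t ^ 2))
    (hψl : Function.LeftInverse ψ φ) (hψr : Function.RightInverse ψ φ)
    (h s : ℝ) (hh : 0 < h)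
    (κ : ℝ → ℝ) (hκ : Differentiable ℝ κ)
    (hint : ∀ q : ℝ, (∫ t in (0 : ℝ)..h, ψ (q * t + κ q)) = -s) :
    ∀ q : ℝ,
      (∫ t in (0 : ℝ)..h, (t + deriv κ q) * deriv ψ (q * t + κ q)) = 0 ∧
      deriv κ q = -(∫ t in (0 : ℝ)..h, t * deriv ψ (q * t + κ q)) /
        (∫ t in (0 : ℝ)..h, deriv ψ (q * t + κ q)) ∧
      deriv κ q < 0 := by
  have hc : 0 < ν * (1 - 9 * r / 8) := by nlinarith
  have hDpos (t : ℝ) : 0 < phiDeriv ν lam r t := hc.trans_le (le_phiDeriv lam hν.le hr0 t)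
  have hψ : ∀ x, HasDerivAt ψ (phiDeriv ν lam r (ψ x))⁻¹ x :=
    hasDerivAt_inverse_of_deriv_pos (funext hφ ▸ hasDerivAt_phi ν lam r) hDpos hψl hψr
  have hψ' : deriv ψ = fun x => (phiDeriv ν lam r (ψ x))⁻¹ := funext fun x => (hψ x).deriv
  have hψ'pos (x : ℝ) : 0 < deriv ψ x := hψ' ▸ inv_pos.2 (hDpos _)
  have hψ'b (x : ℝ) : |deriv ψ x| ≤ (ν * (1 - 9 * r / 8))⁻¹ := by
    rw [abs_of_pos (hψ'pos x), hψ']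
    exact inv_anti₀ hc (le_phiDeriv lam hν.le hr0 _)
  have hψ'c : Continuous (deriv ψ) := hψ' ▸
    ((continuous_phiDeriv ν lam r).comp (continuous_iff_continuousAt.2 fun x =>
      (hψ x).continuousAt)).inv₀ fun x => (hDpos _).ne'
  intro q
  have hderiv := HasDerivAt.intervalIntegral_comp_affine
    (fun x => (hψ x).differentiableAt.hasDerivAt) hψ'c hψ'b 0 h (hκ q).hasDerivAt
  have hconst : HasDerivAt (fun q => ∫ t in (0 : ℝ)..h, ψ (q * t + κ q)) 0 q := by
    simpa only [hint] using hasDerivAt_const q (-s)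
  have h0 := hderiv.unique hconst
  have hwc : Continuous fun t => deriv ψ (q * t + κ q) := hψ'c.comp (by fun_prop)
  have hκ' := eq_neg_div_of_intervalIntegral_add_mul_eq_zero hwc
    (intervalIntegral.intervalIntegral_pos_of_pos_on (hwc.intervalIntegrable 0 h)
      (fun _ _ => hψ'pos _) hh).ne' h0
  exact ⟨h0, hκ', hκ' ▸ neg_div_intervalIntegral_neg hwc (fun _ _ => hψ'pos _) hh⟩

/-- For ν > 0, λ ≥ 0, 0 ≤ r < 8/9, ψ the inverse of φ(t) = ν(1−r)t + ν r t/(1+λ²t²),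
h > 0, s ∈ ℝ, and κ : ℝ → ℝ differentiable with ∫₀^h ψ(q t + κ(q)) dt = −s for all q:
then for every q, ∫₀^h (t + κ'(q)) ψ'(q t + κ(q)) dt = 0, equivalently
κ'(q) = −(∫₀^h t ψ'(q t + κ(q)) dt)/(∫₀^h ψ'(q t + κ(q)) dt), and κ'(q) < 0. -/
theorem stmt_5 (ν lam r : ℝ) (hν : 0 < ν) (hlam : 0 ≤ lam) (hr0 : 0 ≤ r) (hr1 : r < 8 / 9)
    (φ ψ : ℝ → ℝ) (hφ : ∀ t, φ t = ν * (1 - r) * t + ν * r * t / (1 + lam ^ 2 * t ^ 2))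
    (hψl : Function.LeftInverse ψ φ) (hψr : Function.RightInverse ψ φ)
    (h s : ℝ) (hh : 0 < h)
    (κ : ℝ → ℝ) (hκ : Differentiable ℝ κ)
    (hint : ∀ q : ℝ, (∫ t in (0 : ℝ)..h, ψ (q * t + κ q)) = -s) :
    ∀ q : ℝ,
      (∫ t in (0 : ℝ)..h, (t + deriv κ q) * deriv ψ (q * t + κ q)) = 0 ∧
      deriv κ q = -(∫ t in (0 : ℝ)..h, t * deriv ψ (q * t + κ q)) /
        (∫ t in (0 : ℝ)..h, deriv ψ (q * t + κ q)) ∧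
      deriv κ q < 0 :=
  stmt_5_general ν lam r hν hr0 hr1 φ ψ hφ hψl hψr h s hh κ hκ hint
end

section
/- Let h > 0 and 0 < m ≤ M be real numbers, and let g : [0,h] → ℝ be integrable with m ≤ g(t) ≤ M for almost every t ∈ [0,h]. Define K' = −(∫₀^h t g(t) dt)/(∫₀^h g(t) dt). Then −M h/(2m) ≤ K' ≤ −m h/(2M). -/
/-! Since `m ≤ g ≤ M`, the moment `∫₀^h t g` lies between `m h²/2` and `M h²/2` and the mass
`∫₀^h g` between `m h` and `M h`; dividing the extreme bounds gives the bounds on `K'`. -/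

open MeasureTheory Set

theorem intervalIntegral.integral_mul_mem_of_ae_mem_Icc {a b m M : ℝ} {w g : ℝ → ℝ}
    (hab : a ≤ b) (hw : ContinuousOn w (Icc a b)) (hw₀ : ∀ t ∈ Icc a b, 0 ≤ w t)
    (hg : IntegrableOn g (Icc a b))
    (hbound : ∀ᵐ t ∂volume.restrict (Icc a b), m ≤ g t ∧ g t ≤ M) :
    m * ∫ t in a..b, w t ≤ ∫ t in a..b, w t * g t ∧
      ∫ t in a..b, w t * g t ≤ M * ∫ t in a..b, w t := by
  have hw_int : IntervalIntegrable w volume a b := hw.intervalIntegrable_of_Icc hab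
  have hwg_int : IntervalIntegrable (fun t => w t * g t) volume a b :=
    (intervalIntegrable_iff_integrableOn_Icc_of_le hab).2 (hg.continuousOn_mul hw isCompact_Icc)
  have hw₀_ae : ∀ᵐ t ∂volume.restrict (Icc a b), 0 ≤ w t :=
    ae_restrict_of_forall_mem measurableSet_Icc hw₀
  rw [← intervalIntegral.integral_const_mul, ← intervalIntegral.integral_const_mul]
  constructor
  · refine intervalIntegral.integral_mono_ae_restrict hab (hw_int.const_mul m) hwg_int ?_
    filter_upwards [hbound, hw₀_ae] with t ht hwt
    nlinarith
  · refine intervalIntegral.integral_mono_ae_restrict hab hwg_int (hw_int.const_mul M) ?_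
    filter_upwards [hbound, hw₀_ae] with t ht hwt
    nlinarith

theorem div_mem_Icc_of_mem_Icc {A B a b c d : ℝ} (ha : 0 < a) (hc : 0 < c) (hd : 0 < d)
    (hA : a * c ≤ A ∧ A ≤ b * c) (hB : a * d ≤ B ∧ B ≤ b * d) :
    a * c / (b * d) ≤ A / B ∧ A / B ≤ b * c / (a * d) := by
  have hA₀ : 0 ≤ A := by nlinarith
  have hB₀ : 0 < B := by nlinarith
  have hb : 0 < b := by nlinarith
  constructor
  · calc a * c / (b * d) ≤ A / (b * d) := by gcongr; exact hA.1
      _ ≤ A / B := by gcongr; exact hB.2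
  · calc A / B ≤ A / (a * d) := by gcongr; exact hB.1
      _ ≤ b * c / (a * d) := by gcongr; exact hA.2

theorem stmt_6_general (h m M : ℝ) (hh : 0 < h) (hm : 0 < m)
    (g : ℝ → ℝ) (hg : IntegrableOn g (Set.Icc 0 h))
    (hbound : ∀ᵐ t ∂(volume.restrict (Set.Icc 0 h)), m ≤ g t ∧ g t ≤ M)
    (K' : ℝ)
    (hK' : K' = -(∫ t in (0 : ℝ)..h, t * g t) / (∫ t in (0 : ℝ)..h, g t)) :
    -(M * h) / (2 * m) ≤ K' ∧ K' ≤ -(m * h) / (2 * M) := by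
  have hmoment := intervalIntegral.integral_mul_mem_of_ae_mem_Icc hh.le continuousOn_id
    (fun t ht => ht.1) hg hbound
  have hmass := intervalIntegral.integral_mul_mem_of_ae_mem_Icc hh.le continuousOn_const
    (fun _ _ => zero_le_one) hg hbound
  simp only [id, integral_id, one_mul, intervalIntegral.integral_const, smul_eq_mul,
    mul_one, sub_zero, ne_eq, OfNat.ofNat_ne_zero, not_false_eq_true, zero_pow] at hmoment hmass
  obtain ⟨hlow, hup⟩ := div_mem_Icc_of_mem_Icc hm (by positivity : 0 < h ^ 2 / 2) hh hmoment hmass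
  rw [hK', neg_div, neg_div, neg_div, neg_le_neg_iff, neg_le_neg_iff]
  constructor
  · convert hup using 1; field_simp
  · convert hlow using 1; field_simp

/-- For h > 0, 0 < m ≤ M and g integrable on [0,h] with m ≤ g ≤ M a.e. on [0,h],
the quantity K' = −(∫₀^h t g(t) dt)/(∫₀^h g(t) dt) satisfies −Mh/(2m) ≤ K' ≤ −mh/(2M). -/
theorem stmt_6 (h m M : ℝ) (hh : 0 < h) (hm : 0 < m) (hmM : m ≤ M)
    (g : ℝ → ℝ) (hg : IntegrableOn g (Set.Icc 0 h))
    (hbound : ∀ᵐ t ∂(volume.restrict (Set.Icc 0 h)), m ≤ g t ∧ g t ≤ M)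
    (K' : ℝ)
    (hK' : K' = -(∫ t in (0 : ℝ)..h, t * g t) / (∫ t in (0 : ℝ)..h, g t)) :
    -(M * h) / (2 * m) ≤ K' ∧ K' ≤ -(m * h) / (2 * M) :=
  stmt_6_general h m M hh hm g hg hbound K' hK'
end

section
/- Let h > 0 and 0 < m ≤ M be real numbers with 3M ≤ 4m, and let g : [0,h] → ℝ be integrable with m ≤ g(t) ≤ M for almost every t ∈ [0,h]. Define K' = −(∫₀^h t g(t) dt)/(∫₀^h g(t) dt). Then h³(m/3 − M/4) ≤ ∫₀^h t (t + K') g(t) dt ≤ h³(M/3 − m/4), and moreover ∫₀^h t (t + K') g(t) dt > 0. -/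
/-!
Since `∫₀^h (t + K') g = 0`, the integral `∫₀^h t (t + K') g` equals the weighted variance
`∫₀^h (t + K')² g`, and `c = K'` (minus the weighted mean) minimises `c ↦ ∫₀^h (t + c)² g`.
Bounding `g` below by `m` gives the lower bound `m h³/12`; comparing with `c = -h/2` and bounding
`g` above by `M` gives the upper bound `M h³/12`. Both lie between `h³(m/3 - M/4)` and
`h³(M/3 - m/4)` as soon as `m ≤ M`, and the lower one is positive.
-/

open MeasureTheory intervalIntegral

section WeightedMoments

variable {g : ℝ → ℝ} {a b : ℝ}

theorem integral_add_div_mul_eq_zero (hg : IntervalIntegrable g volume a b)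
    (hA : ∫ t in a..b, g t ≠ 0) :
    ∫ t in a..b, (t + -(∫ t in a..b, t * g t) / ∫ t in a..b, g t) * g t = 0 := by
  simp only [add_mul]
  rw [integral_add (hg.continuousOn_mul (g := fun t => t) continuousOn_id) (hg.const_mul _), intervalIntegral.integral_const_mul]
  field_simp
  ring

theorem integral_mul_add_mul_eq_integral_sq_mul (hg : IntervalIntegrable g volume a b) {c : ℝ}
    (hc : ∫ t in a..b, (t + c) * g t = 0) :
    ∫ t in a..b, t * (t + c) * g t = ∫ t in a..b, (t + c) ^ 2 * g t := by
  have hsplit : ∀ t, (t + c) ^ 2 * g t = t * (t + c) * g t + c * ((t + c) * g t) := fun t => by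
    ring
  simp only [hsplit]
  rw [integral_add (hg.continuousOn_mul (by fun_prop)) ((hg.continuousOn_mul (by fun_prop)).const_mul _),
    intervalIntegral.integral_const_mul, hc, mul_zero, add_zero]

theorem integral_sq_add_mul_le (hg : IntervalIntegrable g volume a b)
    (hg0 : 0 ≤ ∫ t in a..b, g t) {c : ℝ} (hc : ∫ t in a..b, (t + c) * g t = 0) (d : ℝ) :
    ∫ t in a..b, (t + c) ^ 2 * g t ≤ ∫ t in a..b, (t + d) ^ 2 * g t := by
  have hsplit : ∀ t, (t + d) ^ 2 * g t
      = (t + c) ^ 2 * g t + (2 * (d - c) * ((t + c) * g t) + (d - c) ^ 2 * g t) := fun t => by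
    ring
  simp only [hsplit]
  rw [integral_add (hg.continuousOn_mul (by fun_prop))
      (((hg.continuousOn_mul (by fun_prop)).const_mul _).add (hg.const_mul _)),
    integral_add ((hg.continuousOn_mul (by fun_prop)).const_mul _) (hg.const_mul _),
    intervalIntegral.integral_const_mul, intervalIntegral.integral_const_mul, hc]
  nlinarith [mul_nonneg (sq_nonneg (d - c)) hg0]

theorem const_mul_integral_le_integral_mul_of_ae_le (hab : a ≤ b)
    (hg : IntervalIntegrable g volume a b) {φ : ℝ → ℝ} (hφ : Continuous φ) (hφ0 : ∀ t, 0 ≤ φ t)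
    {m : ℝ} (hm : ∀ᵐ t ∂volume.restrict (Set.Icc a b), m ≤ g t) :
    m * ∫ t in a..b, φ t ≤ ∫ t in a..b, φ t * g t := by
  rw [← intervalIntegral.integral_const_mul]
  refine integral_mono_ae_restrict hab ((hφ.intervalIntegrable _ _).const_mul _)
    (hg.continuousOn_mul hφ.continuousOn) (hm.mono fun t ht => ?_)
  simpa only [mul_comm] using mul_le_mul_of_nonneg_left ht (hφ0 t)

theorem integral_mul_le_const_mul_integral_of_ae_le (hab : a ≤ b)
    (hg : IntervalIntegrable g volume a b) {φ : ℝ → ℝ} (hφ : Continuous φ) (hφ0 : ∀ t, 0 ≤ φ t)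
    {M : ℝ} (hM : ∀ᵐ t ∂volume.restrict (Set.Icc a b), g t ≤ M) :
    ∫ t in a..b, φ t * g t ≤ M * ∫ t in a..b, φ t := by
  rw [← intervalIntegral.integral_const_mul]
  refine integral_mono_ae_restrict hab (hg.continuousOn_mul hφ.continuousOn)
    ((hφ.intervalIntegrable _ _).const_mul _) (hM.mono fun t ht => ?_)
  simpa only [mul_comm] using mul_le_mul_of_nonneg_left ht (hφ0 t)

end WeightedMoments

theorem integral_sq_add (a b c : ℝ) :
    ∫ t in a..b, (t + c) ^ 2 = (b - a) ^ 3 / 12 + (b - a) * (a + b + 2 * c) ^ 2 / 4 := by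
  rw [integral_comp_add_right (fun t => t ^ 2), integral_pow]
  ring

theorem stmt_7_general (h m M : ℝ) (hh : 0 < h) (hm : 0 < m) (hmM : m ≤ M)
    (g : ℝ → ℝ) (hg : IntegrableOn g (Set.Icc 0 h))
    (hbound : ∀ᵐ t ∂(volume.restrict (Set.Icc 0 h)), m ≤ g t ∧ g t ≤ M)
    (K' : ℝ)
    (hK' : K' = -(∫ t in (0 : ℝ)..h, t * g t) / (∫ t in (0 : ℝ)..h, g t)) :
    (h ^ 3 * (m / 3 - M / 4) ≤ ∫ t in (0 : ℝ)..h, t * (t + K') * g t) ∧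
    (∫ t in (0 : ℝ)..h, t * (t + K') * g t) ≤ h ^ 3 * (M / 3 - m / 4) ∧
    0 < ∫ t in (0 : ℝ)..h, t * (t + K') * g t := by
  have hgi : IntervalIntegrable g volume 0 h :=
    (intervalIntegrable_iff_integrableOn_Icc_of_le hh.le).2 hg
  have hsq : ∀ c t : ℝ, 0 ≤ (t + c) ^ 2 := fun c t => sq_nonneg _
  have hmass : m * h ≤ ∫ t in (0 : ℝ)..h, g t := by
    simpa using const_mul_integral_le_integral_mul_of_ae_le hh.le hgi continuous_const
      (fun _ => zero_le_one) (hbound.mono fun _ ht => ht.1)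
  have hmass_pos : 0 < ∫ t in (0 : ℝ)..h, g t := (mul_pos hm hh).trans_le hmass
  have hcentred : ∫ t in (0 : ℝ)..h, (t + K') * g t = 0 :=
    hK' ▸ integral_add_div_mul_eq_zero hgi hmass_pos.ne'
  have hlower : m * (h ^ 3 / 12) ≤ ∫ t in (0 : ℝ)..h, (t + K') ^ 2 * g t := by
    have hweight := const_mul_integral_le_integral_mul_of_ae_le hh.le hgi (by fun_prop) (hsq K')
      (hbound.mono fun _ ht => ht.1)
    rw [integral_sq_add] at hweight
    nlinarith [mul_nonneg hm.le (mul_nonneg hh.le (sq_nonneg (0 + h + 2 * K')))]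
  have hupper : ∫ t in (0 : ℝ)..h, (t + K') ^ 2 * g t ≤ M * (h ^ 3 / 12) := by
    have hweight := integral_mul_le_const_mul_integral_of_ae_le hh.le hgi (by fun_prop)
      (hsq (-(h / 2))) (hbound.mono fun _ ht => ht.2)
    rw [integral_sq_add] at hweight
    have hmin := integral_sq_add_mul_le hgi hmass_pos.le hcentred (-(h / 2))
    nlinarith
  rw [integral_mul_add_mul_eq_integral_sq_mul hgi hcentred]
  have hgap : h ^ 3 * m ≤ h ^ 3 * M := mul_le_mul_of_nonneg_left hmM (by positivity)
  have hpos : 0 < m * (h ^ 3 / 12) := by positivity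
  exact ⟨by linarith, by linarith, by linarith⟩

/-- For h > 0, 0 < m ≤ M with 3M ≤ 4m and g integrable on [0,h] with m ≤ g ≤ M a.e.,
setting K' = −(∫₀^h t g)/(∫₀^h g), one has
h³(m/3 − M/4) ≤ ∫₀^h t (t + K') g(t) dt ≤ h³(M/3 − m/4), and this integral is positive. -/
theorem stmt_7 (h m M : ℝ) (hh : 0 < h) (hm : 0 < m) (hmM : m ≤ M) (h3M : 3 * M ≤ 4 * m)
    (g : ℝ → ℝ) (hg : IntegrableOn g (Set.Icc 0 h))
    (hbound : ∀ᵐ t ∂(volume.restrict (Set.Icc 0 h)), m ≤ g t ∧ g t ≤ M)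
    (K' : ℝ)
    (hK' : K' = -(∫ t in (0 : ℝ)..h, t * g t) / (∫ t in (0 : ℝ)..h, g t)) :
    (h ^ 3 * (m / 3 - M / 4) ≤ ∫ t in (0 : ℝ)..h, t * (t + K') * g t) ∧
    (∫ t in (0 : ℝ)..h, t * (t + K') * g t) ≤ h ^ 3 * (M / 3 - m / 4) ∧
    0 < ∫ t in (0 : ℝ)..h, t * (t + K') * g t :=
  stmt_7_general h m M hh hm hmM g hg hbound K' hK'
end

section
/- Let ν > 0, λ ≥ 0, 0 ≤ r < 8/9, h > 0 and s ∈ ℝ, and let φ(t) = ν(1−r)t + ν r t/(1+λ²t²). Suppose u : [0,h] → ℝ is differentiable on [0,h], u(0) = s, u(h) = 0, and the function z ↦ φ(u'(z)) is constant on [0,h]. Then u(z) = s(1 − z/h) for all z ∈ [0,h]; consequently u'(z) = −s/h, the shear stress σ₁₂ := r ν u'(z)/(1+λ²u'(z)²) equals −r ν s h/(h² + λ² s²), and the normal stresses satisfy σ₁₁ = −σ₂₂ = −λ u'(z) σ₁₂ = −r ν λ s²/(h² + λ² s²). -/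
/-!
Writing `φ a - φ b = ν (a - b) Q / ((1 + λ²a²)(1 + λ²b²))`, the factor `Q` is positive for
`r < 8/9`, so `φ` is injective and the constancy of `φ (u')` forces `u'` to be constant.
By the mean value theorem `u` is then affine on `[0, h]`, its boundary values fix the slope
at `-s/h`, and the stresses are evaluated at this slope.
-/

open Set

noncomputable def effectiveShearFlux (ν lam r t : ℝ) : ℝ :=
  ν * (1 - r) * t + ν * r * t / (1 + lam ^ 2 * t ^ 2)

/-- Calling the left-hand side `Q`: for `0 < r < 8/9` positivity follows from
`4(1-r)Q = (2(1-r)(1+λ²ab) - r)² + r(8-9r) + 4(1-r)²λ²(a-b)²`. -/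
lemma flux_difference_factor_pos (lam r a b : ℝ) (hr : r < 8 / 9) :
    0 < (1 - r) * (1 + lam ^ 2 * a ^ 2) * (1 + lam ^ 2 * b ^ 2) + r * (1 - lam ^ 2 * a * b) := by
  have ha : 0 < 1 + lam ^ 2 * a ^ 2 := by positivity
  have hb : 0 < 1 + lam ^ 2 * b ^ 2 := by positivity
  rcases le_or_gt r 0 with hr0 | hr0
  · have hq :
        0 ≤ lam ^ 2 * a ^ 2 + lam ^ 2 * b ^ 2 + lam ^ 2 * a * b + (lam ^ 2 * a * b) ^ 2 := by
      nlinarith [sq_nonneg (lam * a + lam * b), sq_nonneg (lam * a), sq_nonneg (lam * b)]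
    nlinarith [mul_pos ha hb, mul_nonneg (neg_nonneg.2 hr0) hq]
  · have h1 : 0 < 1 - r := by linarith
    nlinarith [sq_nonneg (2 * (1 - r) * (1 + lam ^ 2 * a * b) - r),
      mul_pos hr0 (by linarith : (0 : ℝ) < 8 - 9 * r),
      mul_nonneg (mul_nonneg (sq_nonneg (2 * (1 - r))) (sq_nonneg lam)) (sq_nonneg (a - b))]

lemma effectiveShearFlux_sub (ν lam r a b : ℝ) :
    effectiveShearFlux ν lam r a - effectiveShearFlux ν lam r b =
      ν * (a - b) *
          ((1 - r) * (1 + lam ^ 2 * a ^ 2) * (1 + lam ^ 2 * b ^ 2) + r * (1 - lam ^ 2 * a * b)) /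
        ((1 + lam ^ 2 * a ^ 2) * (1 + lam ^ 2 * b ^ 2)) := by
  have ha : 1 + lam ^ 2 * a ^ 2 ≠ 0 := by positivity
  have hb : 1 + lam ^ 2 * b ^ 2 ≠ 0 := by positivity
  unfold effectiveShearFlux
  field_simp
  ring

lemma effectiveShearFlux_injective {ν : ℝ} (hν : ν ≠ 0) (lam : ℝ) {r : ℝ}
    (hr : r < 8 / 9) :
    Function.Injective (effectiveShearFlux ν lam r) := by
  intro a b hab
  have hQ := (flux_difference_factor_pos lam r a b hr).ne'
  have hden : (1 + lam ^ 2 * a ^ 2) * (1 + lam ^ 2 * b ^ 2) ≠ 0 := by positivity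
  have := effectiveShearFlux_sub ν lam r a b
  rw [hab, sub_self, eq_comm] at this
  simpa [hν, hQ, hden, sub_eq_zero] using this

theorem eq_add_smul_of_derivWithin_Icc_eq {E : Type*} [NormedAddCommGroup E] [NormedSpace ℝ E]
    {f : ℝ → E} {a b : ℝ} {c : E} (hf : DifferentiableOn ℝ f (Icc a b))
    (hderiv : ∀ x ∈ Ico a b, derivWithin f (Icc a b) x = c) :
    ∀ x ∈ Icc a b, f x = f a + (x - a) • c := by
  refine eq_of_has_deriv_right_eq (f' := fun _ => c) (fun x hx => ?_) (fun x _ => ?_)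
    hf.continuousOn (by fun_prop) (by simp)
  · rw [← hderiv x hx]
    exact (hf x (mem_Icc_of_Ico hx)).hasDerivWithinAt.mono_of_mem_nhdsWithin
      (Icc_mem_nhdsGE_of_mem hx)
  · simpa using (((hasDerivAt_id x).sub_const a).smul_const c).const_add (f a) |>.hasDerivWithinAt

theorem stmt_10_general (ν lam r : ℝ) (hν : 0 < ν) (hr1 : r < 8 / 9)
    (h s : ℝ) (hh : 0 < h)
    (φ : ℝ → ℝ) (hφ : ∀ t, φ t = ν * (1 - r) * t + ν * r * t / (1 + lam ^ 2 * t ^ 2))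
    (u : ℝ → ℝ) (hu : DifferentiableOn ℝ u (Set.Icc 0 h))
    (hu0 : u 0 = s) (huh : u h = 0)
    (hconst : ∀ z ∈ Set.Icc (0 : ℝ) h, ∀ z' ∈ Set.Icc (0 : ℝ) h,
      φ (derivWithin u (Set.Icc 0 h) z) = φ (derivWithin u (Set.Icc 0 h) z')) :
    ∀ z ∈ Set.Icc (0 : ℝ) h,
      u z = s * (1 - z / h) ∧
      derivWithin u (Set.Icc 0 h) z = -s / h ∧
      r * ν * derivWithin u (Set.Icc 0 h) z /
          (1 + lam ^ 2 * (derivWithin u (Set.Icc 0 h) z) ^ 2)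
        = -(r * ν * s * h) / (h ^ 2 + lam ^ 2 * s ^ 2) ∧
      -(lam * derivWithin u (Set.Icc 0 h) z *
          (r * ν * derivWithin u (Set.Icc 0 h) z /
            (1 + lam ^ 2 * (derivWithin u (Set.Icc 0 h) z) ^ 2)))
        = -(r * ν * lam * s ^ 2) / (h ^ 2 + lam ^ 2 * s ^ 2) := by
  have hφ_inj : Function.Injective φ :=
    funext hφ ▸ effectiveShearFlux_injective hν.ne' lam hr1
  have h0 : (0 : ℝ) ∈ Icc 0 h := left_mem_Icc.2 hh.le
  set c := derivWithin u (Icc 0 h) 0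
  have hderiv : ∀ z ∈ Icc 0 h, derivWithin u (Icc 0 h) z = c := fun z hz =>
    hφ_inj (hconst z hz 0 h0)
  have hu_affine : ∀ z ∈ Icc 0 h, u z = s + z * c := fun z hz => by
    simpa [hu0] using
      eq_add_smul_of_derivWithin_Icc_eq hu (fun x hx => hderiv x (mem_Icc_of_Ico hx)) z hz
  have hc : c = -s / h := by
    have := hu_affine h (right_mem_Icc.2 hh.le)
    rw [huh] at this
    field_simp
    linarith
  intro z hz
  rw [hderiv z hz, hc, hu_affine z hz, hc]
  refine ⟨by field_simp; ring, rfl, by field_simp, by field_simp⟩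

/-- Couette case: for ν > 0, λ ≥ 0, 0 ≤ r < 8/9, h > 0, s ∈ ℝ and
φ(t) = ν(1−r)t + ν r t/(1+λ²t²), if u is differentiable on [0,h] with u(0) = s, u(h) = 0
and z ↦ φ(u'(z)) constant on [0,h], then u(z) = s(1 − z/h) on [0,h], u'(z) = −s/h,
the shear stress σ₁₂ = r ν u'/(1+λ²u'²) equals −rνsh/(h²+λ²s²), and the normal stresses
satisfy σ₁₁ = −σ₂₂ = −λ u' σ₁₂ = −rνλs²/(h²+λ²s²). -/
theorem stmt_10 (ν lam r : ℝ) (hν : 0 < ν) (hlam : 0 ≤ lam) (hr0 : 0 ≤ r) (hr1 : r < 8 / 9)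
    (h s : ℝ) (hh : 0 < h)
    (φ : ℝ → ℝ) (hφ : ∀ t, φ t = ν * (1 - r) * t + ν * r * t / (1 + lam ^ 2 * t ^ 2))
    (u : ℝ → ℝ) (hu : DifferentiableOn ℝ u (Set.Icc 0 h))
    (hu0 : u 0 = s) (huh : u h = 0)
    (hconst : ∀ z ∈ Set.Icc (0 : ℝ) h, ∀ z' ∈ Set.Icc (0 : ℝ) h,
      φ (derivWithin u (Set.Icc 0 h) z) = φ (derivWithin u (Set.Icc 0 h) z')) :
    ∀ z ∈ Set.Icc (0 : ℝ) h,
      u z = s * (1 - z / h) ∧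
      derivWithin u (Set.Icc 0 h) z = -s / h ∧
      r * ν * derivWithin u (Set.Icc 0 h) z /
          (1 + lam ^ 2 * (derivWithin u (Set.Icc 0 h) z) ^ 2)
        = -(r * ν * s * h) / (h ^ 2 + lam ^ 2 * s ^ 2) ∧
      -(lam * derivWithin u (Set.Icc 0 h) z *
          (r * ν * derivWithin u (Set.Icc 0 h) z /
            (1 + lam ^ 2 * (derivWithin u (Set.Icc 0 h) z) ^ 2)))
        = -(r * ν * lam * s ^ 2) / (h ^ 2 + lam ^ 2 * s ^ 2) :=
  stmt_10_general ν lam r hν hr1 h s hh φ hφ u hu hu0 huh hconst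
end

section
/- Let ν > 0, λ ≥ 0, 0 ≤ r < 8/9, and let φ(t) = ν(1−r)t + ν r t/(1+λ²t²) with inverse ψ. Then for every h > 0 and every q, s ∈ ℝ there exists exactly one pair (u, κ) consisting of a continuously differentiable function u : [0,h] → ℝ and a real number κ such that u(0) = s, u(h) = 0 and φ(u'(z)) = q z + κ for all z ∈ [0,h]; moreover this u is given by u(z) = s + ∫₀^z ψ(q t + κ) dt, where κ is the unique real number with ∫₀^h ψ(q t + κ) dt + s = 0. -/
/-!
Since `φ` is a continuous bijection of `ℝ`, its inverse `ψ` is continuous and strictly monotone,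
and `φ (u' z) = q z + κ` is equivalent to `u' z = ψ (q z + κ)`. Together with `u 0 = s` this
forces `u z = s + ∫₀^z ψ (q t + κ) dt`, and `u h = 0` becomes `F κ + s = 0` for
`F κ = ∫₀^h ψ (q t + κ) dt`. Monotonicity of `ψ` makes `F` strictly monotone; since `q t` is
bounded on `[0, h]` and `ψ` is onto, `F` takes values on both sides of any target, so it is
onto by the intermediate value theorem. Hence `κ`, and with it `u`, exists and is unique.
-/

open Function Set

theorem Continuous.continuous_of_leftInverse_of_rightInverse {φ ψ : ℝ → ℝ} (hφ : Continuous φ)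
    (hl : LeftInverse ψ φ) (hr : RightInverse ψ φ) : Continuous ψ := by
  rcases hφ.strictMono_of_inj hl.injective with hmono | hanti
  · have hψ : Monotone ψ := fun x y hxy => hmono.le_iff_le.1 (by rwa [hr x, hr y])
    exact hψ.continuous_of_surjective hl.surjective
  · have hψ : Monotone fun x => -ψ x := fun x y hxy =>
      neg_le_neg (hanti.le_iff_ge.1 (by rwa [hr x, hr y]))
    exact continuous_neg_iff.1 (hψ.continuous_of_surjective (neg_surjective.comp hl.surjective))

theorem eqOn_add_integral_of_derivWithin_eq {u f : ℝ → ℝ} {a b : ℝ}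
    (hu : DifferentiableOn ℝ u (Icc a b)) (hf : ContinuousOn f (Icc a b))
    (hderiv : ∀ z ∈ Icc a b, derivWithin u (Icc a b) z = f z) :
    EqOn u (fun z => u a + ∫ t in a..z, f t) (Icc a b) := by
  intro z hz
  have hsub : Icc a z ⊆ Icc a b := Icc_subset_Icc le_rfl hz.2
  have hFTC : ∫ t in a..z, f t = u z - u a := by
    refine intervalIntegral.integral_eq_sub_of_hasDerivAt_of_le hz.1 (hu.continuousOn.mono hsub)
      (fun x hx => ?_) ((hf.mono hsub).intervalIntegrable_of_Icc hz.1)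
    have hx' : x ∈ Ioo a b := ⟨hx.1, hx.2.trans_le hz.2⟩
    rw [← hderiv x (Ioo_subset_Icc_self hx')]
    exact (hu x (Ioo_subset_Icc_self hx')).hasDerivWithinAt.hasDerivAt
      (Icc_mem_nhds hx'.1 hx'.2)
  simp [hFTC]

section ShiftedIntegral

variable {ψ g : ℝ → ℝ} {a b : ℝ}

theorem continuous_intervalIntegral_comp_add (hψ : Continuous ψ) (hg : Continuous g) :
    Continuous fun κ => ∫ t in a..b, ψ (g t + κ) :=
  intervalIntegral.continuous_parametric_intervalIntegral_of_continuous'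
    (f := fun κ t => ψ (g t + κ)) (by fun_prop) a b

theorem intervalIntegrable_comp_add (hψ : Continuous ψ) (hg : Continuous g) (κ : ℝ) :
    IntervalIntegrable (fun t => ψ (g t + κ)) MeasureTheory.volume a b :=
  (hψ.comp (hg.add continuous_const)).intervalIntegrable a b

theorem strictMono_intervalIntegral_comp_add (hψ : Continuous ψ) (hmono : StrictMono ψ)
    (hg : Continuous g) (hab : a < b) : StrictMono fun κ => ∫ t in a..b, ψ (g t + κ) := by
  intro κ₁ κ₂ hκ
  have hint := intervalIntegrable_comp_add (a := a) (b := b) hψ hg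
  have hpos : 0 < ∫ t in a..b, (ψ (g t + κ₂) - ψ (g t + κ₁)) :=
    intervalIntegral.intervalIntegral_pos_of_pos ((hint κ₂).sub (hint κ₁))
      (fun t => sub_pos.2 (hmono (by linarith))) hab
  rw [intervalIntegral.integral_sub (hint κ₂) (hint κ₁)] at hpos
  exact sub_pos.1 hpos

theorem surjective_intervalIntegral_comp_add (hψ : Continuous ψ) (hmono : StrictMono ψ)
    (hsurj : Surjective ψ) (hg : Continuous g) (hab : a < b) :
    Surjective fun κ => ∫ t in a..b, ψ (g t + κ) := by
  intro c
  obtain ⟨m, hm⟩ := hsurj (c / (b - a))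
  obtain ⟨B, hB⟩ := isCompact_Icc.exists_bound_of_continuousOn (s := Icc a b) hg.continuousOn
  have hgB : ∀ t ∈ Icc a b, -B ≤ g t ∧ g t ≤ B := fun t ht => abs_le.1 (hB t ht)
  have hB0 : 0 ≤ B := (norm_nonneg _).trans (hB a (left_mem_Icc.2 hab.le))
  have hint := intervalIntegrable_comp_add (a := a) (b := b) hψ hg
  have hconst : ∫ _ in a..b, ψ m = c := by
    rw [hm, intervalIntegral.integral_const, smul_eq_mul]
    field_simp [sub_ne_zero.2 hab.ne']
  have hlo : (∫ t in a..b, ψ (g t + (m - B))) ≤ c :=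
    hconst ▸ intervalIntegral.integral_mono_on hab.le (hint _) intervalIntegrable_const
      fun t ht => hmono.monotone (by linarith [hgB t ht])
  have hhi : c ≤ ∫ t in a..b, ψ (g t + (m + B)) :=
    hconst ▸ intervalIntegral.integral_mono_on hab.le intervalIntegrable_const (hint _)
      fun t ht => hmono.monotone (by linarith [hgB t ht])
  obtain ⟨κ, -, hκ⟩ := intermediate_value_Icc (by linarith : m - B ≤ m + B)
    (continuous_intervalIntegral_comp_add hψ hg).continuousOn ⟨hlo, hhi⟩
  exact ⟨κ, hκ⟩

theorem bijective_intervalIntegral_comp_add (hψ : Continuous ψ) (hinj : Injective ψ)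
    (hsurj : Surjective ψ) (hg : Continuous g) (hab : a < b) :
    Bijective fun κ => ∫ t in a..b, ψ (g t + κ) := by
  rcases hψ.strictMono_of_inj hinj with hmono | hanti
  · exact ⟨(strictMono_intervalIntegral_comp_add hψ hmono hg hab).injective,
      surjective_intervalIntegral_comp_add hψ hmono hsurj hg hab⟩
  · have hneg : Bijective fun κ => ∫ t in a..b, -ψ (g t + κ) :=
      ⟨(strictMono_intervalIntegral_comp_add hψ.neg hanti.neg hg hab).injective,
        surjective_intervalIntegral_comp_add hψ.neg hanti.neg (neg_surjective.comp hsurj) hg hab⟩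
    simpa [comp_def] using (Equiv.neg ℝ).bijective.comp hneg

end ShiftedIntegral

theorem boundaryValueProblem_iff {φ ψ : ℝ → ℝ} (hψ : Continuous ψ) (hl : LeftInverse ψ φ)
    (hr : RightInverse ψ φ) {h : ℝ} (hh : 0 < h) (q s κ : ℝ) (u : ℝ → ℝ) :
    (DifferentiableOn ℝ u (Icc 0 h) ∧ ContinuousOn (derivWithin u (Icc 0 h)) (Icc 0 h) ∧
        u 0 = s ∧ u h = 0 ∧ ∀ z ∈ Icc (0 : ℝ) h, φ (derivWithin u (Icc 0 h) z) = q * z + κ) ↔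
      (∫ t in (0 : ℝ)..h, ψ (q * t + κ)) + s = 0 ∧
        EqOn u (fun z => s + ∫ t in (0 : ℝ)..z, ψ (q * t + κ)) (Icc 0 h) := by
  set v : ℝ → ℝ := fun z => s + ∫ t in (0 : ℝ)..z, ψ (q * t + κ)
  have hf : Continuous fun t => ψ (q * t + κ) := by fun_prop
  have hv : ∀ z, HasDerivAt v (ψ (q * z + κ)) z := fun z =>
    (hf.integral_hasStrictDerivAt 0 z).hasDerivAt.const_add s
  have h0 : (0 : ℝ) ∈ Icc 0 h := left_mem_Icc.2 hh.le
  have hh' : h ∈ Icc 0 h := right_mem_Icc.2 hh.le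
  constructor
  · rintro ⟨hdiff, -, hu0, huh, hode⟩
    have hrep := eqOn_add_integral_of_derivWithin_eq hdiff hf.continuousOn
      fun z hz => by rw [← hode z hz, hl]
    rw [hu0] at hrep
    have hrep_h := hrep hh'
    simp only [huh] at hrep_h
    exact ⟨by linarith, hrep⟩
  · rintro ⟨hroot, hu⟩
    have hderiv : EqOn (derivWithin u (Icc 0 h)) (fun z => ψ (q * z + κ)) (Icc 0 h) :=
      fun z hz => (derivWithin_congr hu (hu hz)).trans
        ((hv z).hasDerivWithinAt.derivWithin (uniqueDiffOn_Icc hh z hz))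
    refine ⟨fun z hz => (hv z).differentiableAt.differentiableWithinAt.congr hu (hu hz),
      hf.continuousOn.congr hderiv, by simp [hu h0, v], by simp [hu hh', v]; linarith,
      fun z hz => by rw [hderiv hz, hr]⟩

theorem stmt_13_general (ν lam r : ℝ)
    (φ ψ : ℝ → ℝ) (hφ : ∀ t, φ t = ν * (1 - r) * t + ν * r * t / (1 + lam ^ 2 * t ^ 2))
    (hψl : Function.LeftInverse ψ φ) (hψr : Function.RightInverse ψ φ)
    (h q s : ℝ) (hh : 0 < h)
    (P : (ℝ → ℝ) → ℝ → Prop)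
    (hP : ∀ (u : ℝ → ℝ) (κ : ℝ), P u κ ↔
      (DifferentiableOn ℝ u (Set.Icc 0 h) ∧
       ContinuousOn (derivWithin u (Set.Icc 0 h)) (Set.Icc 0 h) ∧
       u 0 = s ∧ u h = 0 ∧
       ∀ z ∈ Set.Icc (0 : ℝ) h, φ (derivWithin u (Set.Icc 0 h) z) = q * z + κ)) :
    (∃ (u : ℝ → ℝ) (κ : ℝ), P u κ) ∧
    (∀ (u₁ : ℝ → ℝ) (κ₁ : ℝ) (u₂ : ℝ → ℝ) (κ₂ : ℝ),
      P u₁ κ₁ → P u₂ κ₂ → κ₁ = κ₂ ∧ Set.EqOn u₁ u₂ (Set.Icc 0 h)) ∧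
    (∀ (u : ℝ → ℝ) (κ : ℝ), P u κ →
      (∀ z ∈ Set.Icc (0 : ℝ) h, u z = s + ∫ t in (0 : ℝ)..z, ψ (q * t + κ)) ∧
      (∫ t in (0 : ℝ)..h, ψ (q * t + κ)) + s = 0 ∧
      (∀ κ' : ℝ, (∫ t in (0 : ℝ)..h, ψ (q * t + κ')) + s = 0 → κ' = κ)) := by
  have hφc : Continuous φ := by
    rw [funext hφ]
    exact (by fun_prop : Continuous fun t => ν * (1 - r) * t).add
      ((by fun_prop : Continuous fun t => ν * r * t).div (by fun_prop) fun t => by positivity)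
  have hψc := hφc.continuous_of_leftInverse_of_rightInverse hψl hψr
  have hF : Bijective fun κ => ∫ t in (0 : ℝ)..h, ψ (q * t + κ) :=
    bijective_intervalIntegral_comp_add hψc hψr.injective hψl.surjective
      (continuous_const_mul q) hh
  have hP' (u κ) := (hP u κ).trans (boundaryValueProblem_iff hψc hψl hψr hh q s κ u)
  obtain ⟨κ, hκ⟩ := hF.2 (-s)
  have hroot (κ' : ℝ) : (∫ t in (0 : ℝ)..h, ψ (q * t + κ')) + s = 0 ↔ κ' = κ := by
    rw [add_eq_zero_iff_eq_neg, ← hκ]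
    exact hF.1.eq_iff
  refine ⟨⟨_, κ, (hP' _ κ).2 ⟨(hroot κ).2 rfl, fun _ _ => rfl⟩⟩,
    fun u₁ κ₁ u₂ κ₂ h₁ h₂ => ?_, fun u κ' hu => ?_⟩
  · obtain ⟨hκ₁, h₁⟩ := (hP' u₁ κ₁).1 h₁
    obtain ⟨hκ₂, h₂⟩ := (hP' u₂ κ₂).1 h₂
    obtain rfl := (hroot κ₁).1 hκ₁
    obtain rfl := (hroot κ₂).1 hκ₂
    exact ⟨rfl, h₁.trans h₂.symm⟩
  · obtain ⟨hκ', hu⟩ := (hP' u κ').1 hu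
    exact ⟨hu, hκ', fun κ'' h'' => ((hroot κ'').1 h'').trans ((hroot κ').1 hκ').symm⟩

/-- For ν > 0, λ ≥ 0, 0 ≤ r < 8/9, φ(t) = ν(1−r)t + ν r t/(1+λ²t²) with inverse ψ:
for every h > 0 and q, s ∈ ℝ there is exactly one pair (u, κ), with u continuously
differentiable on [0,h], such that u(0) = s, u(h) = 0 and φ(u'(z)) = q z + κ on [0,h]
(uniqueness of u meaning equality on [0,h]); moreover u(z) = s + ∫₀^z ψ(q t + κ) dt,
where κ is the unique real number with ∫₀^h ψ(q t + κ) dt + s = 0. -/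
theorem stmt_13 (ν lam r : ℝ) (hν : 0 < ν) (hlam : 0 ≤ lam) (hr0 : 0 ≤ r) (hr1 : r < 8 / 9)
    (φ ψ : ℝ → ℝ) (hφ : ∀ t, φ t = ν * (1 - r) * t + ν * r * t / (1 + lam ^ 2 * t ^ 2))
    (hψl : Function.LeftInverse ψ φ) (hψr : Function.RightInverse ψ φ)
    (h q s : ℝ) (hh : 0 < h)
    (P : (ℝ → ℝ) → ℝ → Prop)
    (hP : ∀ (u : ℝ → ℝ) (κ : ℝ), P u κ ↔
      (DifferentiableOn ℝ u (Set.Icc 0 h) ∧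
       ContinuousOn (derivWithin u (Set.Icc 0 h)) (Set.Icc 0 h) ∧
       u 0 = s ∧ u h = 0 ∧
       ∀ z ∈ Set.Icc (0 : ℝ) h, φ (derivWithin u (Set.Icc 0 h) z) = q * z + κ)) :
    (∃ (u : ℝ → ℝ) (κ : ℝ), P u κ) ∧
    (∀ (u₁ : ℝ → ℝ) (κ₁ : ℝ) (u₂ : ℝ → ℝ) (κ₂ : ℝ),
      P u₁ κ₁ → P u₂ κ₂ → κ₁ = κ₂ ∧ Set.EqOn u₁ u₂ (Set.Icc 0 h)) ∧
    (∀ (u : ℝ → ℝ) (κ : ℝ), P u κ →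
      (∀ z ∈ Set.Icc (0 : ℝ) h, u z = s + ∫ t in (0 : ℝ)..z, ψ (q * t + κ)) ∧
      (∫ t in (0 : ℝ)..h, ψ (q * t + κ)) + s = 0 ∧
      (∀ κ' : ℝ, (∫ t in (0 : ℝ)..h, ψ (q * t + κ')) + s = 0 → κ' = κ)) :=
  stmt_13_general ν lam r φ ψ hφ hψl hψr h q s hh P hP
end
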